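/- arXiv:1604.02622 — 7 statements merged into one kernel-verified Lean document; each statement's English description precedes it below -/
import Mathlib

section
/- Let g : ℕ → ℕ satisfy g(0) = 0, g(2n) = 4·g(n), and g(2n+1) = g(2n) + 1. If n is a sum of distinct powers of 2, say n = q₁ + ... + q_k with each qᵢ a distinct power of 2, then g(n) = q₁² + ... + q_k². -/
theorem Nat.eq_sum_map_pow_bitIndices {R : Type*} [Semiring R] (g : ℕ → R) (b : R)
    (hg0 : g 0 = 0) (hge : ∀ n, g (2 * n) = b * g n)
    (hgo : ∀ n, g (2 * n + 1) = g (2 * n) + 1) (n : ℕ) :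
    g n = (n.bitIndices.map (b ^ ·)).sum := by
  induction n using Nat.binaryRec with
  | zero => simp [hg0]
  | bit c n ih =>
    have hshift : ((n.bitIndices.map (· + 1)).map (b ^ ·)).sum = b * g n := by
      rw [List.map_map, ih, ← List.sum_map_mul_left]
      simp only [Function.comp_def, _root_.pow_succ']
    cases c
    · rw [Nat.bit_false, Nat.bitIndices_two_mul, hshift, hge]
    · rw [Nat.bit_true, Nat.bitIndices_two_mul_add_one, List.map_cons, List.sum_cons, hshift,
        hgo, hge, pow_zero, add_comm]

theorem stmt_0 (g : ℕ → ℕ) (hg0 : g 0 = 0)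
    (hge : ∀ n, g (2 * n) = 4 * g n)
    (hgo : ∀ n, g (2 * n + 1) = g (2 * n) + 1)
    (S : Finset ℕ) (n : ℕ) (hn : n = ∑ i ∈ S, 2 ^ i) :
    g n = ∑ i ∈ S, (2 ^ i) ^ 2 := by
  have hS : n.bitIndices.toFinset = S := hn ▸ Finset.toFinset_bitIndices_sum_two_pow S
  rw [Nat.eq_sum_map_pow_bitIndices g 4 hg0 hge hgo n,
    ← List.sum_toFinset _ Nat.bitIndices_nodup, hS]
  simp_rw [← pow_mul, mul_comm _ 2, pow_mul]
  norm_num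
end

section
/- Let g : ℕ → ℕ be defined by g(0)=0, g(2n)=4g(n), g(2n+1)=g(2n)+1. Then every natural number n can be written uniquely as n = g(a) + 2·g(b) for some a, b in ℕ. -/
/-!
Both recursions collapse to `g a = 4 * g (a / 2) + a % 2`, so `g a + 2 * g b` has last base-4
digit `a % 2 + 2 * (b % 2)` and the number formed by its remaining digits is
`g (a / 2) + 2 * g (b / 2)`. Existence and uniqueness of the representation then follow by
peeling off one base-4 digit at a time: every digit `0, 1, 2, 3` arises from exactly one pair of
bits.
-/

section BinaryToQuaternary

variable {g : ℕ → ℕ}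

theorem eq_four_mul_div_two_add_mod_two (hge : ∀ n, g (2 * n) = 4 * g n)
    (hgo : ∀ n, g (2 * n + 1) = g (2 * n) + 1) (a : ℕ) : g a = 4 * g (a / 2) + a % 2 := by
  obtain ⟨k, rfl | rfl⟩ := Nat.even_or_odd' a
  · rw [hge, Nat.mul_div_cancel_left k two_pos, Nat.mul_mod_right, add_zero]
  · rw [hgo, hge, Nat.mul_add_div two_pos, Nat.mul_add_mod]
    norm_num

variable (hg : ∀ a, g a = 4 * g (a / 2) + a % 2)
include hg

theorem exists_eq_add_two_mul (n : ℕ) : ∃ a b, n = g a + 2 * g b := by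
  rcases Nat.eq_zero_or_pos n with rfl | hn
  · exact ⟨0, 0, by have h0 := hg 0; rw [Nat.zero_div] at h0; omega⟩
  obtain ⟨a, b, hab⟩ := exists_eq_add_two_mul (n / 4)
  refine ⟨2 * a + n % 2, 2 * b + n / 2 % 2, ?_⟩
  rw [hg (2 * a + n % 2), hg (2 * b + n / 2 % 2)]
  have ha : (2 * a + n % 2) / 2 = a := by omega
  have hb : (2 * b + n / 2 % 2) / 2 = b := by omega
  rw [ha, hb]
  omega
termination_by n
decreasing_by omega

theorem eq_and_eq_of_add_two_mul_eq {a b a' b' : ℕ} (h : g a + 2 * g b = g a' + 2 * g b') :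
    a = a' ∧ b = b' := by
  by_cases h0 : a + b + a' + b' = 0
  · omega
  have ha := hg a
  have hb := hg b
  have ha' := hg a'
  have hb' := hg b'
  have hhalf : a / 2 = a' / 2 ∧ b / 2 = b' / 2 :=
    eq_and_eq_of_add_two_mul_eq (by omega)
  omega
termination_by a + b + a' + b'
decreasing_by omega

end BinaryToQuaternary

theorem stmt_1_general (g : ℕ → ℕ)
    (hge : ∀ n, g (2 * n) = 4 * g n)
    (hgo : ∀ n, g (2 * n + 1) = g (2 * n) + 1)
    (n : ℕ) :
    ∃! p : ℕ × ℕ, n = g p.1 + 2 * g p.2 := by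
  have hg := eq_four_mul_div_two_add_mod_two hge hgo
  obtain ⟨a, b, hab⟩ := exists_eq_add_two_mul hg n
  refine ⟨(a, b), hab, fun ⟨a', b'⟩ h' => ?_⟩
  obtain ⟨rfl, rfl⟩ := eq_and_eq_of_add_two_mul_eq hg (h'.symm.trans hab)
  rfl

theorem stmt_1 (g : ℕ → ℕ) (hg0 : g 0 = 0)
    (hge : ∀ n, g (2 * n) = 4 * g n)
    (hgo : ∀ n, g (2 * n + 1) = g (2 * n) + 1)
    (n : ℕ) :
    ∃! p : ℕ × ℕ, n = g p.1 + 2 * g p.2 :=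
  stmt_1_general g hge hgo n
end

section
/- Let g be the Nicolas–Serre digit function, q a power of 2, and define [a,b] to be the odd number 1 + 2g(a) + 4g(b). If ⌊b/q⌋ is even, then [a, b+q] = [a,b] + 4q². -/
/-! Adding `2^e` to `b` sets the binary digit of weight `2^e`, which is `0` exactly when
`b / 2^e` is even; the digit recursion of `g` turns that digit into the base-4 digit of
weight `4^e`, so `g` increases by `4^e = (2^e)^2`. -/

section DigitRecursion

variable {g : ℕ → ℕ} (hge : ∀ n, g (2 * n) = 4 * g n)
  (hgo : ∀ n, g (2 * n + 1) = g (2 * n) + 1)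
include hge hgo

theorem apply_two_mul_add_of_lt_two {m r : ℕ} (hr : r < 2) :
    g (2 * m + r) = 4 * g m + r := by
  interval_cases r
  · simpa using hge m
  · rw [hgo, hge]

theorem apply_add_two_pow_of_even_div {e b : ℕ} (hb : Even (b / 2 ^ e)) :
    g (b + 2 ^ e) = g b + 4 ^ e := by
  induction e generalizing b with
  | zero =>
    obtain ⟨m, rfl⟩ : Even b := by simpa using hb
    rw [pow_zero, pow_zero, ← two_mul, hgo]
  | succ e ih =>
    have hbit : b % 2 < 2 := Nat.mod_lt b two_pos
    have hhalf : Even (b / 2 / 2 ^ e) := by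
      rwa [Nat.div_div_eq_div_mul, ← pow_succ']
    calc g (b + 2 ^ (e + 1)) = g (2 * (b / 2 + 2 ^ e) + b % 2) := by
          rw [pow_succ']; congr 1; omega
      _ = 4 * (g (b / 2) + 4 ^ e) + b % 2 := by
          rw [apply_two_mul_add_of_lt_two hge hgo hbit, ih hhalf]
      _ = g (2 * (b / 2) + b % 2) + 4 ^ (e + 1) := by
          rw [apply_two_mul_add_of_lt_two hge hgo hbit]; ring
      _ = g b + 4 ^ (e + 1) := by rw [Nat.div_add_mod]

end DigitRecursion

theorem stmt_4_general (g : ℕ → ℕ)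
    (hge : ∀ n, g (2 * n) = 4 * g n)
    (hgo : ∀ n, g (2 * n + 1) = g (2 * n) + 1)
    (q : ℕ) (hq : ∃ e : ℕ, q = 2 ^ e)
    (a b : ℕ) (hb : Even (b / q)) :
    1 + 2 * g a + 4 * g (b + q) = (1 + 2 * g a + 4 * g b) + 4 * q ^ 2 := by
  obtain ⟨e, rfl⟩ := hq
  rw [apply_add_two_pow_of_even_div hge hgo hb, sq, ← mul_pow]
  ring

theorem stmt_4 (g : ℕ → ℕ) (hg0 : g 0 = 0)
    (hge : ∀ n, g (2 * n) = 4 * g n)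
    (hgo : ∀ n, g (2 * n + 1) = g (2 * n) + 1)
    (q : ℕ) (hq : ∃ e : ℕ, q = 2 ^ e)
    (a b : ℕ) (hb : Even (b / q)) :
    1 + 2 * g a + 4 * g (b + q) = (1 + 2 * g a + 4 * g b) + 4 * q ^ 2 :=
  stmt_4_general g hge hgo q hq a b hb
end

section
/- Define a strict order on ℕ × ℕ by (c,d) < (a,b) iff c+d < a+b, or c+d = a+b and d < b. Let q be a power of 2 and n = 1 + 2g(a) + 4g(b) where g is the Nicolas–Serre digit function. If ⌊a/q⌋ is odd, then the pair (c,d) with 1 + 2g(c) + 4g(d) = n + 2q² satisfies (c,d) < (a+q, b). -/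
/-!
The base-4 digits of `g n = spread n` are the binary digits of `n`. Halved, the hypothesis says
that `spread c + 2 * spread d` is `m = spread a + 2 * spread b` plus `q²`. Give the bits of `m` at
positions `2i` and `2i+1` weight `2^i`; then `a + b` is the total weight of `m`, and since a carry
merges two bits of weight `2^i` into one of weight `2^i` or `2^(i+1)`, weight is subadditive.
If bit `e` of `a` is set (`q = 2^e`), then `m + q² = (m - q²) + 2 q²`, where `m - q²` has weight
`a + b - q` and `2 q²` has weight `q`, so `c + d ≤ a + b < a + q + b`.
-/

/-- `(c,d)` strictly precedes `(a,b)` in the Nicolas–Serre order. -/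
def prec (c d a b : ℕ) : Prop := c + d < a + b ∨ (c + d = a + b ∧ d < b)

def spread (n : ℕ) : ℕ := if n = 0 then 0 else 4 * spread (n / 2) + n % 2
decreasing_by omega

/-- The weight of `m` when its bits at positions `2i` and `2i+1` are worth `2 ^ i`. -/
def pairWeight (m : ℕ) : ℕ := if m = 0 then 0 else 2 * pairWeight (m / 4) + m % 2 + m / 2 % 2
decreasing_by omega

theorem spread_eq (n : ℕ) : spread n = 4 * spread (n / 2) + n % 2 := by
  rw [spread]
  split_ifs with h
  · subst h; rw [spread]; simp
  · rfl

theorem pairWeight_eq (m : ℕ) : pairWeight m = 2 * pairWeight (m / 4) + m % 2 + m / 2 % 2 := by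
  rw [pairWeight]
  split_ifs with h
  · subst h; rw [pairWeight]; simp
  · rfl

@[simp]
theorem spread_zero : spread 0 = 0 := by
  rw [spread]; rfl

theorem spread_two_mul (n : ℕ) : spread (2 * n) = 4 * spread n := by
  rw [spread_eq, Nat.mul_div_cancel_left n two_pos, Nat.mul_mod_right, add_zero]

theorem spread_two_mul_add_one (n : ℕ) : spread (2 * n + 1) = 4 * spread n + 1 := by
  rw [spread_eq]
  congr 3 <;> omega

theorem eq_spread {g : ℕ → ℕ} (h0 : g 0 = 0) (h_even : ∀ n, g (2 * n) = 4 * g n)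
    (h_odd : ∀ n, g (2 * n + 1) = g (2 * n) + 1) : g = spread := by
  funext n
  induction n using Nat.strong_induction_on with
  | _ n ih =>
    rcases n.even_or_odd' with ⟨k, rfl | rfl⟩
    · rcases k.eq_zero_or_pos with rfl | hk
      · simp [h0]
      · rw [h_even, ih k (by omega), spread_two_mul]
    · rw [h_odd, h_even, ih k (by omega), spread_two_mul_add_one]

theorem spread_two_pow (e : ℕ) : spread (2 ^ e) = 4 ^ e := by
  induction e with
  | zero => simp [spread]
  | succ e ih => rw [pow_succ', spread_two_mul, ih, pow_succ']

theorem spread_eq_spread_sub_add {a e : ℕ} (ha : Odd (a / 2 ^ e)) :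
    spread a = spread (a - 2 ^ e) + 4 ^ e := by
  induction e generalizing a with
  | zero =>
    obtain ⟨k, rfl⟩ : Odd a := by simpa using ha
    simp [spread_two_mul, spread_two_mul_add_one]
  | succ e ih =>
    have ha' : Odd (a / 2 / 2 ^ e) := by rwa [Nat.div_div_eq_div_mul, ← pow_succ']
    have hle : 2 ^ e ≤ a / 2 := (Nat.one_le_div_iff (by positivity)).mp ha'.pos
    rw [spread_eq a, ih ha', spread_eq (a - 2 ^ (e + 1)), pow_succ, pow_succ]
    have hsub : (a - 2 ^ e * 2) / 2 = a / 2 - 2 ^ e := by omega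
    have hmod : (a - 2 ^ e * 2) % 2 = a % 2 := by omega
    rw [hsub, hmod]
    ring

theorem pairWeight_le_self (m : ℕ) : pairWeight m ≤ m := by
  induction m using Nat.strong_induction_on with
  | _ m ih =>
    rcases m.eq_zero_or_pos with rfl | hm
    · simp [pairWeight]
    · rw [pairWeight_eq]
      have := ih (m / 4) (by omega)
      omega

theorem pairWeight_add_le (x y : ℕ) : pairWeight (x + y) ≤ pairWeight x + pairWeight y := by
  induction h : x + y using Nat.strong_induction_on generalizing x y with
  | _ n ih =>
    subst h
    rcases Nat.eq_zero_or_pos (x + y) with hxy | hxy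
    · obtain ⟨rfl, rfl⟩ : x = 0 ∧ y = 0 := by omega
      simp
    set k := (x % 4 + y % 4) / 4
    have hdiv : (x + y) / 4 = (x / 4 + y / 4) + k := by omega
    have hcarry := ih _ (by omega) (x / 4 + y / 4) k rfl
    have hquot := ih _ (by omega) (x / 4) (y / 4) rfl
    have hk := pairWeight_le_self k
    rw [pairWeight_eq (x + y), pairWeight_eq x, pairWeight_eq y, hdiv]
    omega

theorem pairWeight_spread_add_two_mul_spread (a b : ℕ) :
    pairWeight (spread a + 2 * spread b) = a + b := by
  induction h : a + b using Nat.strong_induction_on generalizing a b with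
  | _ n ih =>
    subst h
    rcases Nat.eq_zero_or_pos (a + b) with hab | hab
    · obtain ⟨rfl, rfl⟩ : a = 0 ∧ b = 0 := by omega
      simp [pairWeight]
    have hrec := ih _ (by omega) (a / 2) (b / 2) rfl
    rw [pairWeight_eq, spread_eq a, spread_eq b]
    have : (4 * spread (a / 2) + a % 2 + 2 * (4 * spread (b / 2) + b % 2)) / 4
        = spread (a / 2) + 2 * spread (b / 2) := by omega
    rw [this, hrec]
    omega

theorem stmt_6 (g : ℕ → ℕ) (hg0 : g 0 = 0)
    (hge : ∀ n, g (2 * n) = 4 * g n)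
    (hgo : ∀ n, g (2 * n + 1) = g (2 * n) + 1)
    (q : ℕ) (hq : ∃ e : ℕ, q = 2 ^ e)
    (a b : ℕ) (ha : Odd (a / q))
    (c d : ℕ) (hcd : 1 + 2 * g c + 4 * g d = (1 + 2 * g a + 4 * g b) + 2 * q ^ 2) :
    prec c d (a + q) b := by
  obtain rfl := eq_spread hg0 hge hgo
  obtain ⟨e, rfl⟩ := hq
  have hq_le : 2 ^ e ≤ a := (Nat.one_le_div_iff (by positivity)).mp ha.pos
  have hsum : spread c + 2 * spread d
      = (spread (a - 2 ^ e) + 2 * spread b) + (spread 0 + 2 * spread (2 ^ e)) := by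
    have hsq : (2 ^ e) ^ 2 = 4 ^ e := by rw [← pow_mul, mul_comm, pow_mul]; norm_num
    rw [spread_eq_spread_sub_add ha, hsq] at hcd
    rw [spread_zero, spread_two_pow]
    omega
  have hcd_le : c + d ≤ (a - 2 ^ e + b) + (0 + 2 ^ e) := by
    rw [← pairWeight_spread_add_two_mul_spread c d, hsum,
      ← pairWeight_spread_add_two_mul_spread (a - 2 ^ e) b,
      ← pairWeight_spread_add_two_mul_spread 0 (2 ^ e)]
    exact pairWeight_add_le _ _
  exact Or.inl (by have := Nat.two_pow_pos e; omega)
end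

section
/- Define a partial strict order ≺ on pairs by (c,d) ≺ (a,b) iff c+d < a+b, or c+d = a+b and d < b. Let q be a power of 2 and n = 1 + 2g(a) + 4g(b). Let (c,d) be the unique pair with 1 + 2g(c) + 4g(d) = n + 2q². Then (c,d) = (a+q, b) or (c,d) ≺ (a+q, b). Similarly, if (c',d') is the unique pair with 1 + 2g(c') + 4g(d') = n + 4q², then (c',d') = (a, b+q) or (c',d') ≺ (a, b+q). -/
structure IsMoserDeBruijn (g : ℕ → ℕ) : Prop where
  apply_two_mul : ∀ n, g (2 * n) = 4 * g n
  apply_two_mul_add_one : ∀ n, g (2 * n + 1) = g (2 * n) + 1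

def interleave (g : ℕ → ℕ) (a b : ℕ) : ℕ := g a + 2 * g b

namespace IsMoserDeBruijn

variable {g : ℕ → ℕ} (hg : IsMoserDeBruijn g)
include hg

theorem apply_zero : g 0 = 0 := by
  have := hg.apply_two_mul 0
  rw [mul_zero] at this
  omega

theorem apply_eq_four_mul_add_mod (n : ℕ) : g n = 4 * g (n / 2) + n % 2 := by
  rcases Nat.even_or_odd' n with ⟨m, rfl | rfl⟩
  · simp [hg.apply_two_mul]
  · simp [hg.apply_two_mul_add_one, hg.apply_two_mul, Nat.mul_add_div]

theorem apply_two_pow (e : ℕ) : g (2 ^ e) = (2 ^ e) ^ 2 := by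
  induction e with
  | zero => simpa [hg.apply_zero] using hg.apply_two_mul_add_one 0
  | succ e ih => rw [pow_succ', hg.apply_two_mul, ih]; ring

theorem interleave_eq_four_mul_add_mod (a b : ℕ) :
    interleave g a b = 4 * interleave g (a / 2) (b / 2) + (a % 2 + 2 * (b % 2)) := by
  simp only [interleave]
  rw [hg.apply_eq_four_mul_add_mod a, hg.apply_eq_four_mul_add_mod b]
  ring

/-- The carry-in `t` makes the statement inductive: halving all six numbers leaves a carry `≤ 1`. -/
theorem add_le_of_interleave_eq_add_add {a b i j c d t : ℕ} (ht : t ≤ 1)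
    (h : interleave g c d = interleave g a b + interleave g i j + t) :
    c + d < a + i + t + (b + j) ∨ (c + d = a + i + t + (b + j) ∧ d ≤ b + j) := by
  rcases Nat.eq_zero_or_pos (c + d) with hcd | hcd
  · omega
  rw [hg.interleave_eq_four_mul_add_mod c, hg.interleave_eq_four_mul_add_mod a,
    hg.interleave_eq_four_mul_add_mod i] at h
  set s := (a % 2 + i % 2 + t + 2 * (b % 2 + j % 2)) / 4
  have hhalf : interleave g (c / 2) (d / 2) =
      interleave g (a / 2) (b / 2) + interleave g (i / 2) (j / 2) + s := by omega
  have := add_le_of_interleave_eq_add_add (by omega) hhalf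
  omega
termination_by c + d
decreasing_by omega

theorem eq_or_prec_of_interleave_eq_add {a b i j c d : ℕ}
    (h : interleave g c d = interleave g a b + interleave g i j) :
    (c, d) = (a + i, b + j) ∨ prec c d (a + i) (b + j) := by
  have := hg.add_le_of_interleave_eq_add_add zero_le_one (t := 0) h
  simp only [Prod.mk.injEq, prec]
  omega

end IsMoserDeBruijn

theorem stmt_8_general (g : ℕ → ℕ)
    (hge : ∀ n, g (2 * n) = 4 * g n)
    (hgo : ∀ n, g (2 * n + 1) = g (2 * n) + 1)
    (q : ℕ) (hq : ∃ e : ℕ, q = 2 ^ e) (a b : ℕ) :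
    (∀ c d : ℕ, 1 + 2 * g c + 4 * g d = (1 + 2 * g a + 4 * g b) + 2 * q ^ 2 →
      (c, d) = (a + q, b) ∨ prec c d (a + q) b) ∧
    (∀ c' d' : ℕ, 1 + 2 * g c' + 4 * g d' = (1 + 2 * g a + 4 * g b) + 4 * q ^ 2 →
      (c', d') = (a, b + q) ∨ prec c' d' a (b + q)) := by
  have hg : IsMoserDeBruijn g := ⟨hge, hgo⟩
  obtain ⟨e, rfl⟩ := hq
  have hsq : g (2 ^ e) = (2 ^ e) ^ 2 := hg.apply_two_pow e
  constructor
  · intro c d h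
    simpa using hg.eq_or_prec_of_interleave_eq_add (i := 2 ^ e) (j := 0)
      (by simp only [interleave, hg.apply_zero]; omega)
  · intro c d h
    simpa using hg.eq_or_prec_of_interleave_eq_add (i := 0) (j := 2 ^ e)
      (by simp only [interleave, hg.apply_zero]; omega)

theorem stmt_8 (g : ℕ → ℕ) (hg0 : g 0 = 0)
    (hge : ∀ n, g (2 * n) = 4 * g n)
    (hgo : ∀ n, g (2 * n + 1) = g (2 * n) + 1)
    (q : ℕ) (hq : ∃ e : ℕ, q = 2 ^ e) (a b : ℕ) :
    (∀ c d : ℕ, 1 + 2 * g c + 4 * g d = (1 + 2 * g a + 4 * g b) + 2 * q ^ 2 →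
      (c, d) = (a + q, b) ∨ prec c d (a + q) b) ∧
    (∀ c' d' : ℕ, 1 + 2 * g c' + 4 * g d' = (1 + 2 * g a + 4 * g b) + 4 * q ^ 2 →
      (c', d') = (a, b + q) ∨ prec c' d' a (b + q)) :=
  stmt_8_general g hge hgo q hq a b
end

section
/- Define δ_n ∈ (ℤ/2)[t] for odd n > 0 by δ₁ = δ₃ = δ₅ = 0, δ₇ = t³, and δ_{n+8} = t⁸·δ_n + t²·δ_{n+2}. Write the code of t^n as (a,b). If a > 0, then δ_n is a sum of monomials with code strictly preceding (a−1, b); if a = 0, then δ_n is a sum of monomials with code equal to or strictly preceding (0, b−1). -/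
open Polynomial

/-!
Pascal's rule matches the recurrence, so `δ_n = ∑ C(i+j, i) t^(3+2i+8j)` over `n = 7+6i+8j`.
The code `(c, d)` of `t^m` splits the binary digits of `(m-1)/2` into those in even and in odd
positions. For a monomial of `δ_n` with `C(i+j, i)` odd, compare `x = i+4j+1` (its exponent is
`1 + 2x`) with `y = 3i+4j+3` (`n = 1 + 2y`): the height `c+d` of `x` is smaller than that of `y`
by at least 1 and the skew height `c+2d` by at least 2, and these two inequalities give the order
claim. Halving a number exchanges height and skew height, so both inequalities are proved together
by halving `i` and `j`; by Lucas, `i` and `j` are never both odd, which keeps the carries bounded.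
-/

/-- `splitBits u = (c, d)` collects the binary digits of `u` in even positions into `c` and those
in odd positions into `d`, so that `u = g c + 2 g d`: the code of `t^m` is
`splitBits ((m - 1) / 2)`. -/
def splitBits (u : ℕ) : ℕ × ℕ :=
  if u = 0 then (0, 0) else (2 * (splitBits (u / 2)).2 + u % 2, (splitBits (u / 2)).1)
decreasing_by omega

theorem splitBits_two_mul_add (v e : ℕ) (he : e < 2) :
    splitBits (2 * v + e) = (2 * (splitBits v).2 + e, (splitBits v).1) := by
  rcases Nat.eq_zero_or_pos (2 * v + e) with h | h
  · obtain ⟨rfl, rfl⟩ : v = 0 ∧ e = 0 := by omega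
    simp [splitBits]
  · rw [splitBits, if_neg h.ne', show (2 * v + e) / 2 = v by omega,
      show (2 * v + e) % 2 = e by omega]

section BaseFour

variable {g : ℕ → ℕ} (hg0 : g 0 = 0) (hge : ∀ n, g (2 * n) = 4 * g n)
  (hgo : ∀ n, g (2 * n + 1) = g (2 * n) + 1)
include hge hgo

theorem g_two_mul_add (a e : ℕ) (he : e < 2) : g (2 * a + e) = 4 * g a + e := by
  interval_cases e
  · simpa using hge a
  · rw [hgo, hge]

include hg0

theorem g_splitBits (u : ℕ) : g (splitBits u).1 + 2 * g (splitBits u).2 = u := by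
  induction u using Nat.strong_induction_on with
  | _ u ih =>
    rcases Nat.eq_zero_or_pos u with rfl | hu
    · simp [splitBits, hg0]
    · obtain ⟨v, e, he, hvu, rfl⟩ : ∃ v e, e < 2 ∧ v < u ∧ u = 2 * v + e :=
        ⟨u / 2, u % 2, Nat.mod_lt _ two_pos, by omega, (Nat.div_add_mod u 2).symm⟩
      have := ih v hvu
      rw [splitBits_two_mul_add v e he, g_two_mul_add hge hgo _ e he]
      dsimp only
      omega

theorem splitBits_g (a b : ℕ) : splitBits (g a + 2 * g b) = (a, b) := by
  induction h : a + b using Nat.strong_induction_on generalizing a b with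
  | _ s ih =>
    rcases Nat.eq_zero_or_pos s with rfl | hs
    · obtain ⟨rfl, rfl⟩ : a = 0 ∧ b = 0 := by omega
      simp [splitBits, hg0]
    · have hw := ih (a / 2 + b / 2) (by omega) (a / 2) (b / 2) rfl
      have ha := g_two_mul_add hge hgo (a / 2) (a % 2) (Nat.mod_lt _ two_pos)
      have hb := g_two_mul_add hge hgo (b / 2) (b % 2) (Nat.mod_lt _ two_pos)
      rw [Nat.div_add_mod] at ha hb
      have hu : g a + 2 * g b
          = 2 * (2 * (g (a / 2) + 2 * g (b / 2)) + b % 2) + a % 2 := by omega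
      rw [hu, splitBits_two_mul_add _ _ (Nat.mod_lt _ two_pos),
        splitBits_two_mul_add _ _ (Nat.mod_lt _ two_pos), hw]
      simp only [Nat.div_add_mod]

end BaseFour

theorem odd_choose_div_two {i j : ℕ} (h : Odd ((i + j).choose i)) :
    ¬(i % 2 = 1 ∧ j % 2 = 1) ∧ Odd ((i / 2 + j / 2).choose (i / 2)) := by
  have hlucas := Choose.choose_modEq_choose_mod_mul_choose_div_nat (p := 2) (n := i + j) (k := i)
  have hprod : Odd (((i + j) % 2).choose (i % 2) * ((i + j) / 2).choose (i / 2)) := by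
    rwa [Nat.odd_iff, ← hlucas, ← Nat.odd_iff]
  obtain ⟨hlow, hhigh⟩ := Nat.odd_mul.mp hprod
  have hle : i % 2 ≤ (i + j) % 2 := by
    by_contra hlt
    rw [Nat.choose_eq_zero_of_lt (by omega)] at hlow
    exact Nat.not_odd_zero hlow
  exact ⟨by omega, by rwa [show (i + j) / 2 = i / 2 + j / 2 by omega] at hhigh⟩

def height (u : ℕ) : ℕ := (splitBits u).1 + (splitBits u).2

def skewHeight (u : ℕ) : ℕ := (splitBits u).1 + 2 * (splitBits u).2

theorem height_two_mul_add (v e : ℕ) (he : e < 2) :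
    height (2 * v + e) = skewHeight v + e := by
  simp only [height, skewHeight, splitBits_two_mul_add v e he]
  ring

theorem skewHeight_two_mul_add (v e : ℕ) (he : e < 2) :
    skewHeight (2 * v + e) = 2 * height v + e := by
  simp only [height, skewHeight, splitBits_two_mul_add v e he]
  ring

/-- The offsets `r, s` absorb the carries when `x = i + 4j + r` and `y = 3i + 4j + s` are halved
together. The bounds are those of `x = r`, `y = s` (`s % 2 + s / 2` is the height of `s ≤ 3`). -/
theorem height_le_of_odd_choose {i j : ℕ} (hij : Odd ((i + j).choose i)) {r s : ℕ}
    (hrs : r ≤ s) (hsr : s ≤ r + 2) (hs : s ≤ 3) :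
    height (i + 4 * j + r) + s % 2 + s / 2 ≤ height (3 * i + 4 * j + s) + r % 2 + r / 2 ∧
      skewHeight (i + 4 * j + r) + s ≤ skewHeight (3 * i + 4 * j + s) + r := by
  induction hy : 3 * i + 4 * j + s using Nat.strong_induction_on generalizing i j r s with
  | _ y ih =>
    rcases Nat.eq_zero_or_pos y with rfl | hy0
    · obtain ⟨rfl, rfl, rfl, rfl⟩ : i = 0 ∧ j = 0 ∧ s = 0 ∧ r = 0 := by omega
      simp
    · obtain ⟨hnot, hhalf⟩ := odd_choose_div_two hij
      obtain ⟨s', hs'⟩ : ∃ s', s' = (3 * (i % 2) + 4 * (j % 2) + s) / 2 := ⟨_, rfl⟩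
      obtain ⟨r', hr'⟩ : ∃ r', r' = (i % 2 + 4 * (j % 2) + r) / 2 := ⟨_, rfl⟩
      have hx : i + 4 * j + r
          = 2 * (i / 2 + 4 * (j / 2) + r') + (i % 2 + 4 * (j % 2) + r) % 2 := by omega
      have hy' : y
          = 2 * (3 * (i / 2) + 4 * (j / 2) + s') + (3 * (i % 2) + 4 * (j % 2) + s) % 2 := by omega
      obtain ⟨ih₁, ih₂⟩ := ih _ (by omega) hhalf (r := r') (s := s') (by omega) (by omega)
        (by omega) rfl
      rw [hx, hy', height_two_mul_add _ _ (Nat.mod_lt _ two_pos),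
        height_two_mul_add _ _ (Nat.mod_lt _ two_pos),
        skewHeight_two_mul_add _ _ (Nat.mod_lt _ two_pos),
        skewHeight_two_mul_add _ _ (Nat.mod_lt _ two_pos)]
      rcases Nat.mod_two_eq_zero_or_one i with hi | hi <;>
        rcases Nat.mod_two_eq_zero_or_one j with hj | hj <;>
        interval_cases s <;> interval_cases r <;> omega

section Delta

variable {δ : ℕ → (ZMod 2)[X]}
  (hrec : ∀ n, Odd n → δ (n + 8) = X ^ 8 * δ n + X ^ 2 * δ (n + 2))

include hrec in
theorem coeff_delta_add_eight {n : ℕ} (hn : Odd n) (m : ℕ) :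
    (δ (n + 8)).coeff m =
      (if 8 ≤ m then (δ n).coeff (m - 8) else 0) +
        (if 2 ≤ m then (δ (n + 2)).coeff (m - 2) else 0) := by
  rw [hrec n hn, coeff_add, coeff_X_pow_mul', coeff_X_pow_mul']

variable (h1 : δ 1 = 0) (h3 : δ 3 = 0) (h5 : δ 5 = 0) (h7 : δ 7 = X ^ 3)
include h1 h3 h5 h7 hrec

theorem coeff_delta {n : ℕ} (hn : Odd n) (m : ℕ) :
    (∀ i j, n = 7 + 6 * i + 8 * j → m = 3 + 2 * i + 8 * j →
        (δ n).coeff m = (i + j).choose i) ∧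
      ((∀ i j, n = 7 + 6 * i + 8 * j → m ≠ 3 + 2 * i + 8 * j) → (δ n).coeff m = 0) := by
  induction n using Nat.strong_induction_on generalizing m with
  | _ n ih =>
    obtain ⟨k, rfl⟩ := hn
    by_cases hsmall : 2 * k + 1 < 9
    · obtain hk | hk | hk | hk : k = 0 ∨ k = 1 ∨ k = 2 ∨ k = 3 := by omega
      all_goals subst hk
      · refine ⟨fun i j hn _ => by omega, fun _ => by simp [h1]⟩
      · refine ⟨fun i j hn _ => by omega, fun _ => by simp [h3]⟩
      · refine ⟨fun i j hn _ => by omega, fun _ => by simp [h5]⟩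
      · refine ⟨fun i j hn hm => ?_, fun hne => ?_⟩
        · obtain ⟨rfl, rfl⟩ : i = 0 ∧ j = 0 := by omega
          simp [h7, hm]
        · simp [h7, coeff_X_pow, hne 0 0 rfl]
    obtain ⟨l, hl, hodd⟩ : ∃ l, 2 * k + 1 = l + 8 ∧ Odd l :=
      ⟨2 * (k - 4) + 1, by omega, by simp⟩
    have hodd₂ : Odd (l + 2) := by simpa [Nat.odd_add] using hodd
    rw [hl, coeff_delta_add_eight hrec hodd]
    have ih₈ := fun m => ih l (by omega) hodd m
    have ih₆ := fun m => ih (l + 2) (by omega) hodd₂ m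
    constructor
    · intro i j hn hm
      have hfirst : ∀ j', j = j' + 1 →
          (if 8 ≤ m then (δ l).coeff (m - 8) else 0) = (i + j').choose i := by
        rintro j' rfl
        rw [if_pos (by omega)]
        exact (ih₈ _).1 i j' (by omega) (by omega)
      have hsecond : ∀ i', i = i' + 1 →
          (if 2 ≤ m then (δ (l + 2)).coeff (m - 2) else 0) = (i' + j).choose i' := by
        rintro i' rfl
        rw [if_pos (by omega)]
        exact (ih₆ _).1 i' j (by omega) (by omega)
      rcases i with _ | i <;> rcases j with _ | j
      · omega
      · rw [hfirst j rfl, (ih₆ _).2 fun i' j' _ _ => by omega]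
        simp
      · rw [hsecond i rfl, (ih₈ _).2 fun i' j' _ _ => by omega]
        simp
      · rw [hfirst j rfl, hsecond i rfl, show i + 1 + (j + 1) = i + 1 + j + 1 by ring,
          Nat.choose_succ_succ', show i + (j + 1) = i + 1 + j by ring, Nat.cast_add, add_comm]
    · intro hne
      have hfirst : (if 8 ≤ m then (δ l).coeff (m - 8) else 0) = 0 := by
        split_ifs
        · exact (ih₈ _).2 fun i j hn hm => hne i (j + 1) (by omega) (by omega)
        · rfl
      have hsecond : (if 2 ≤ m then (δ (l + 2)).coeff (m - 2) else 0) = 0 := by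
        split_ifs
        · exact (ih₆ _).2 fun i j hn hm => hne (i + 1) j (by omega) (by omega)
        · rfl
      rw [hfirst, hsecond, add_zero]

theorem exists_of_coeff_delta_ne_zero {n m : ℕ} (hn : Odd n) (hm : (δ n).coeff m ≠ 0) :
    ∃ i j, n = 7 + 6 * i + 8 * j ∧ m = 3 + 2 * i + 8 * j ∧ Odd ((i + j).choose i) := by
  obtain ⟨i, j, hn', hm'⟩ : ∃ i j, n = 7 + 6 * i + 8 * j ∧ m = 3 + 2 * i + 8 * j := by
    by_contra! h
    exact hm ((coeff_delta hrec h1 h3 h5 h7 hn m).2 h)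
  rw [(coeff_delta hrec h1 h3 h5 h7 hn m).1 i j hn' hm', Ne, ZMod.natCast_eq_zero_iff_even,
    Nat.not_even_iff_odd] at hm
  exact ⟨i, j, hn', hm', hm⟩

end Delta

theorem stmt_13 (g : ℕ → ℕ) (hg0 : g 0 = 0)
    (hge : ∀ n, g (2 * n) = 4 * g n)
    (hgo : ∀ n, g (2 * n + 1) = g (2 * n) + 1)
    (δ : ℕ → Polynomial (ZMod 2))
    (h1 : δ 1 = 0) (h3 : δ 3 = 0) (h5 : δ 5 = 0) (h7 : δ 7 = X ^ 3)
    (hrec : ∀ n, Odd n → δ (n + 8) = X ^ 8 * δ n + X ^ 2 * δ (n + 2)) :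
    ∀ n, Odd n → 0 < n → ∀ a b, n = 1 + 2 * g a + 4 * g b →
      (0 < a → ∀ m, (δ n).coeff m ≠ 0 →
        ∃ c d, m = 1 + 2 * g c + 4 * g d ∧ prec c d (a - 1) b) ∧
      (a = 0 → ∀ m, (δ n).coeff m ≠ 0 →
        ∃ c d, m = 1 + 2 * g c + 4 * g d ∧ ((c, d) = (0, b - 1) ∨ prec c d 0 (b - 1))) := by
  intro n hn _ a b hab
  have hcodes : ∀ m, (δ n).coeff m ≠ 0 → ∃ c d, m = 1 + 2 * g c + 4 * g d ∧
      c + d + 1 ≤ a + b ∧ c + 2 * d + 2 ≤ a + 2 * b := by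
    intro m hm
    obtain ⟨i, j, rfl, rfl, hij⟩ := exists_of_coeff_delta_ne_zero hrec h1 h3 h5 h7 hn hm
    have hcode : splitBits (3 * i + 4 * j + 3) = (a, b) := by
      rw [show 3 * i + 4 * j + 3 = g a + 2 * g b by omega, splitBits_g hg0 hge hgo]
    obtain ⟨hheight, hskew⟩ := height_le_of_odd_choose hij (r := 1) (s := 3) (by norm_num)
      (by norm_num) le_rfl
    have hx := g_splitBits hg0 hge hgo (i + 4 * j + 1)
    simp only [height, skewHeight, hcode] at hheight hskew
    exact ⟨(splitBits (i + 4 * j + 1)).1, (splitBits (i + 4 * j + 1)).2, by omega, by omega,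
      by omega⟩
  refine ⟨fun ha m hm => ?_, fun ha m hm => ?_⟩
  · obtain ⟨c, d, hm, hcd, hcd'⟩ := hcodes m hm
    exact ⟨c, d, hm, by unfold prec; omega⟩
  · obtain ⟨c, d, hm, hcd, hcd'⟩ := hcodes m hm
    refine ⟨c, d, hm, ?_⟩
    by_cases h : c = 0 ∧ d = b - 1
    · simp [h]
    · right; unfold prec; omega
end

section
/- Define α_n, β_n, γ_n, δ_n ∈ (ℤ/2)[t] for odd n > 0 by the common recursion A_{n+8} = t⁸·A_n + t²·A_{n+2} with initial values (α₁,α₃,α₅,α₇) = (0, t, 0, t⁵), (β₁,β₃,β₅,β₇) = (t, t³, t⁵, t⁷+t³), (γ₁,γ₃,γ₅,γ₇) = (0, 0, t³, t⁵), (δ₁,δ₃,δ₅,δ₇) = (0, 0, 0, t³). Then: if n ≡ 1 (mod 4), β_n and δ_n lie in the span of {t^m : m ≡ 1 mod 4} and α_n, γ_n lie in the span of {t^m : m ≡ 3 mod 4}; if n ≡ 3 (mod 4), the roles are reversed. -/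
open Polynomial

/-- Membership in the span of monomials `t^m` with `m ≡ 1 (mod 4)`. -/
def inV1 (f : Polynomial (ZMod 2)) : Prop := ∀ m, f.coeff m ≠ 0 → m % 4 = 1

/-- Membership in the span of monomials `t^m` with `m ≡ 3 (mod 4)`. -/
def inV3 (f : Polynomial (ZMod 2)) : Prop := ∀ m, f.coeff m ≠ 0 → m % 4 = 3

/-!
Write `V(r)` for the polynomials whose monomials all have exponent `≡ r (mod 4)`.
Multiplication by `t⁸` preserves `V(r)` and multiplication by `t²` maps `V(r)` to `V(r + 2)`, so
the recursion `A_{n+8} = t⁸ A_n + t² A_{n+2}` propagates the invariant `A_n ∈ V(n + s)` from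
`n ∈ {1, 3, 5, 7}` to all odd `n`. The initial values show `s = 0` for `β, δ` and `s = 2` for `α, γ`.
-/

namespace Polynomial

variable {R : Type*} [Semiring R]

def SupportedModEq (k r : ℕ) (f : R[X]) : Prop := ∀ m, f.coeff m ≠ 0 → m ≡ r [MOD k]

namespace SupportedModEq

variable {k r : ℕ} {f g : R[X]}

theorem zero : SupportedModEq k r (0 : R[X]) := fun m hm => absurd (coeff_zero m) hm

theorem X_pow {n : ℕ} (h : n ≡ r [MOD k]) : SupportedModEq k r (X ^ n : R[X]) := by
  intro m hm
  rw [coeff_X_pow] at hm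
  split_ifs at hm with hmn
  · exact hmn ▸ h
  · exact absurd rfl hm

theorem add (hf : SupportedModEq k r f) (hg : SupportedModEq k r g) :
    SupportedModEq k r (f + g) := by
  intro m hm
  by_cases hfm : f.coeff m = 0
  · exact hg m (by simpa [hfm] using hm)
  · exact hf m hfm

theorem X_pow_mul (hf : SupportedModEq k r f) (j : ℕ) :
    SupportedModEq k (r + j) (X ^ j * f) := by
  intro m hm
  rw [coeff_X_pow_mul'] at hm
  split_ifs at hm with hjm
  · simpa only [Nat.sub_add_cancel hjm] using (hf _ hm).add_right j
  · exact absurd rfl hm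

theorem of_modEq {r' : ℕ} (hf : SupportedModEq k r f) (h : r ≡ r' [MOD k]) :
    SupportedModEq k r' f := fun m hm => (hf m hm).trans h

end SupportedModEq

theorem supportedModEq_of_recurrence (A : ℕ → R[X]) (s : ℕ)
    (hrec : ∀ n, Odd n → A (n + 8) = X ^ 8 * A n + X ^ 2 * A (n + 2))
    (h1 : SupportedModEq 4 (1 + s) (A 1)) (h3 : SupportedModEq 4 (3 + s) (A 3))
    (h5 : SupportedModEq 4 (5 + s) (A 5)) (h7 : SupportedModEq 4 (7 + s) (A 7)) :
    ∀ n, Odd n → SupportedModEq 4 (n + s) (A n) := by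
  intro n
  induction n using Nat.strong_induction_on with
  | _ n ih =>
    intro hn
    have hn2 : n % 2 = 1 := Nat.odd_iff.mp hn
    by_cases hlt : n < 8
    · interval_cases n <;> omega
    obtain ⟨m, rfl⟩ : ∃ m, n = m + 8 := ⟨n - 8, by omega⟩
    have hm : Odd m := Nat.odd_iff.mpr (by omega)
    rw [hrec m hm]
    refine ((ih m (by omega) hm).X_pow_mul 8).add ?_ |>.of_modEq ?_
    · exact ((ih (m + 2) (by omega) (hm.add_even even_two)).X_pow_mul 2).of_modEq
        (by simp only [Nat.ModEq]; omega)
    · simp only [Nat.ModEq]; omega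

end Polynomial

theorem stmt_17 (α β γ δ : ℕ → Polynomial (ZMod 2))
    (hα1 : α 1 = 0) (hα3 : α 3 = X) (hα5 : α 5 = 0) (hα7 : α 7 = X ^ 5)
    (hβ1 : β 1 = X) (hβ3 : β 3 = X ^ 3) (hβ5 : β 5 = X ^ 5) (hβ7 : β 7 = X ^ 7 + X ^ 3)
    (hγ1 : γ 1 = 0) (hγ3 : γ 3 = 0) (hγ5 : γ 5 = X ^ 3) (hγ7 : γ 7 = X ^ 5)
    (hδ1 : δ 1 = 0) (hδ3 : δ 3 = 0) (hδ5 : δ 5 = 0) (hδ7 : δ 7 = X ^ 3)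
    (hrecα : ∀ n, Odd n → α (n + 8) = X ^ 8 * α n + X ^ 2 * α (n + 2))
    (hrecβ : ∀ n, Odd n → β (n + 8) = X ^ 8 * β n + X ^ 2 * β (n + 2))
    (hrecγ : ∀ n, Odd n → γ (n + 8) = X ^ 8 * γ n + X ^ 2 * γ (n + 2))
    (hrecδ : ∀ n, Odd n → δ (n + 8) = X ^ 8 * δ n + X ^ 2 * δ (n + 2)) :
    ∀ n, 0 < n →
      (n % 4 = 1 → inV1 (β n) ∧ inV1 (δ n) ∧ inV3 (α n) ∧ inV3 (γ n)) ∧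
      (n % 4 = 3 → inV1 (α n) ∧ inV1 (γ n) ∧ inV3 (β n) ∧ inV3 (δ n)) := by
  open SupportedModEq in
  have hα := supportedModEq_of_recurrence α 2 hrecα (hα1 ▸ zero)
    (hα3 ▸ pow_one (X : (ZMod 2)[X]) ▸ X_pow rfl) (hα5 ▸ zero) (hα7 ▸ X_pow rfl)
  have hβ := supportedModEq_of_recurrence β 0 hrecβ
    (hβ1 ▸ pow_one (X : (ZMod 2)[X]) ▸ X_pow rfl) (hβ3 ▸ X_pow rfl) (hβ5 ▸ X_pow rfl)
    (hβ7 ▸ (X_pow rfl).add (X_pow rfl))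
  have hγ := supportedModEq_of_recurrence γ 2 hrecγ (hγ1 ▸ zero) (hγ3 ▸ zero)
    (hγ5 ▸ X_pow rfl) (hγ7 ▸ X_pow rfl)
  have hδ := supportedModEq_of_recurrence δ 0 hrecδ (hδ1 ▸ zero) (hδ3 ▸ zero) (hδ5 ▸ zero)
    (hδ7 ▸ X_pow rfl)
  intro n _
  refine ⟨fun h => ?_, fun h => ?_⟩
  · have hn : Odd n := Nat.odd_iff.mpr (by omega)
    refine ⟨(hβ n hn).of_modEq (r' := 1) ?_, (hδ n hn).of_modEq (r' := 1) ?_,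
      (hα n hn).of_modEq (r' := 3) ?_, (hγ n hn).of_modEq (r' := 3) ?_⟩ <;>
    simp only [Nat.ModEq] <;> omega
  · have hn : Odd n := Nat.odd_iff.mpr (by omega)
    refine ⟨(hα n hn).of_modEq (r' := 1) ?_, (hγ n hn).of_modEq (r' := 1) ?_,
      (hβ n hn).of_modEq (r' := 3) ?_, (hδ n hn).of_modEq (r' := 3) ?_⟩ <;>
    simp only [Nat.ModEq] <;> omega
end
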